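/- arXiv:1809.04586 — 6 statements merged into one kernel-verified Lean document; each statement's English description precedes it below -/
import Mathlib

section
/- Let f : ℝ² → ℝ be bounded and Lipschitz and define Ψ : ℝ² → ℝ² by Ψ(s, τ) = (s, χ(s, τ)) where χ(s, τ) = 𝒳(0, τ; s) is the flow of the ODE γ'(s) = f(s, γ(s)) started at γ(0) = τ. Then Ψ is a bijective, locally biLipschitz homeomorphism of ℝ² onto ℝ². -/
/-!
Grönwall's inequality, applied forwards and, after reversing time, backwards, shows that
`τ ↦ χ(s, τ)` is bi-Lipschitz with constant `exp (L |s|)`, while the bound on `f` makes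
`s ↦ χ(s, τ)` `M`-Lipschitz. Together these bound the Lipschitz constants of `Ψ` and `Ψ⁻¹` on
every strip `|s| < R` by `(1 + M) exp (L R)`, and `Ψ` maps each strip onto itself. Injectivity
follows from the lower bi-Lipschitz bound; surjectivity from the intermediate value theorem, since
`χ(s, ·)` is continuous and stays within `M |s|` of the identity.
-/

open Real Set Filter NNReal

section FlowEstimates

variable {E : Type*} [NormedAddCommGroup E] [NormedSpace ℝ E] {v : ℝ → E → E} {L : ℝ≥0}
  {M : ℝ} {χ : ℝ → E → E}

theorem dist_flow_le_of_le (hv : ∀ t, LipschitzWith L (v t))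
    (hχ : ∀ x s, HasDerivAt (fun s => χ s x) (v s (χ s x)) s) {a b : ℝ} (hab : a ≤ b) (x y : E) :
    dist (χ b x) (χ b y) ≤ dist (χ a x) (χ a y) * exp (L * (b - a)) :=
  dist_le_of_trajectories_ODE hv
    (fun s _ => (hχ x s).continuousAt.continuousWithinAt) (fun s _ => (hχ x s).hasDerivWithinAt)
    (fun s _ => (hχ y s).continuousAt.continuousWithinAt) (fun s _ => (hχ y s).hasDerivWithinAt)
    le_rfl b ⟨hab, le_rfl⟩

theorem hasDerivAt_flow_neg (hχ : ∀ x s, HasDerivAt (fun s => χ s x) (v s (χ s x)) s)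
    (x : E) (s : ℝ) : HasDerivAt (fun s => χ (-s) x) (-v (-s) (χ (-s) x)) s := by
  simpa [Function.comp_def] using (hχ x (-s)).scomp s (hasDerivAt_neg s)

/-- Grönwall in both time directions: backwards in time, `s ↦ χ (-s)` solves the ODE of the
field `-v (-s)`, which has the same Lipschitz constant. -/
theorem dist_flow_le (hv : ∀ t, LipschitzWith L (v t))
    (hχ : ∀ x s, HasDerivAt (fun s => χ s x) (v s (χ s x)) s) (a b : ℝ) (x y : E) :
    dist (χ b x) (χ b y) ≤ dist (χ a x) (χ a y) * exp (L * |b - a|) := by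
  rcases le_total a b with hab | hba
  · simpa [abs_of_nonneg (sub_nonneg.2 hab)] using dist_flow_le_of_le hv hχ hab x y
  · have := dist_flow_le_of_le (v := fun t x => -v (-t) x) (χ := fun s x => χ (-s) x)
      (fun t => (hv (-t)).neg) (hasDerivAt_flow_neg hχ) (neg_le_neg hba) x y
    rw [abs_of_nonpos (sub_nonpos.2 hba), neg_sub]
    simpa [neg_add_eq_sub] using this

theorem dist_flow_le_mul_exp (hv : ∀ t, LipschitzWith L (v t))
    (hχ : ∀ x s, HasDerivAt (fun s => χ s x) (v s (χ s x)) s) (hχ0 : ∀ x, χ 0 x = x)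
    (s : ℝ) (x y : E) : dist (χ s x) (χ s y) ≤ dist x y * exp (L * |s|) := by
  simpa [hχ0] using dist_flow_le hv hχ 0 s x y

theorem dist_le_dist_flow_mul_exp (hv : ∀ t, LipschitzWith L (v t))
    (hχ : ∀ x s, HasDerivAt (fun s => χ s x) (v s (χ s x)) s) (hχ0 : ∀ x, χ 0 x = x)
    (s : ℝ) (x y : E) : dist x y ≤ dist (χ s x) (χ s y) * exp (L * |s|) := by
  simpa [hχ0, abs_sub_comm] using dist_flow_le hv hχ s 0 x y

theorem lipschitzWith_flow (hv : ∀ t, LipschitzWith L (v t))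
    (hχ : ∀ x s, HasDerivAt (fun s => χ s x) (v s (χ s x)) s) (hχ0 : ∀ x, χ 0 x = x)
    (s : ℝ) : LipschitzWith (exp (L * |s|)).toNNReal (χ s) :=
  .of_dist_le' fun x y => by rw [mul_comm]; exact dist_flow_le_mul_exp hv hχ hχ0 s x y

theorem dist_flow_time_le (hM : ∀ t x, ‖v t x‖ ≤ M)
    (hχ : ∀ x s, HasDerivAt (fun s => χ s x) (v s (χ s x)) s) (x : E) (s s' : ℝ) :
    dist (χ s x) (χ s' x) ≤ M * dist s s' := by
  simpa [dist_eq_norm] using convex_univ.norm_image_sub_le_of_norm_hasDerivWithin_le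
    (fun s _ => (hχ x s).hasDerivWithinAt) (fun s _ => hM s (χ s x)) (mem_univ s') (mem_univ s)

end FlowEstimates

section Strips

variable {α : Type*}

def flowMap (χ : ℝ → α → α) (p : ℝ × α) : ℝ × α := (p.1, χ p.1 p.2)

def strip (R : ℝ) : Set (ℝ × α) := {p | |p.1| < R}

theorem isOpen_strip [TopologicalSpace α] (R : ℝ) : IsOpen (strip R : Set (ℝ × α)) :=
  isOpen_lt (continuous_abs.comp continuous_fst) continuous_const

theorem mem_strip_abs_fst_add_one (p : ℝ × α) : p ∈ strip (|p.1| + 1) := by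
  simp [strip]

theorem flowMap_image_strip {χ : ℝ → α → α} (hsurj : Function.Surjective (flowMap χ)) (R : ℝ) :
    flowMap χ '' strip R = strip R := by
  refine Subset.antisymm (image_subset_iff.2 fun p hp => hp) fun q hq => ?_
  obtain ⟨p, rfl⟩ := hsurj q
  exact mem_image_of_mem _ hq

theorem LocallyLipschitz.of_lipschitzOnWith_strip [PseudoMetricSpace α] {β : Type*}
    [PseudoMetricSpace β] {g : ℝ × α → β} (K : ℝ → ℝ≥0)
    (hg : ∀ R, LipschitzOnWith (K R) g (strip R)) : LocallyLipschitz g := fun p =>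
  ⟨K _, strip (|p.1| + 1), (isOpen_strip _).mem_nhds (mem_strip_abs_fst_add_one p), hg _⟩

end Strips

section FlowMap

variable {E : Type*} [NormedAddCommGroup E] [NormedSpace ℝ E] {v : ℝ → E → E} {L : ℝ≥0}
  {M : ℝ} {χ : ℝ → E → E}

theorem flowMap_injective (hv : ∀ t, LipschitzWith L (v t))
    (hχ : ∀ x s, HasDerivAt (fun s => χ s x) (v s (χ s x)) s) (hχ0 : ∀ x, χ 0 x = x) :
    Function.Injective (flowMap χ) := by
  rintro ⟨s, x⟩ ⟨s', y⟩ h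
  simp only [flowMap, Prod.mk.injEq] at h
  obtain ⟨rfl, hxy⟩ := h
  have := dist_le_dist_flow_mul_exp hv hχ hχ0 s x y
  rw [hxy, dist_self, zero_mul, dist_le_zero] at this
  rw [this]

theorem dist_flowMap_le (hv : ∀ t, LipschitzWith L (v t)) (hM : ∀ t x, ‖v t x‖ ≤ M)
    (hχ : ∀ x s, HasDerivAt (fun s => χ s x) (v s (χ s x)) s) (hχ0 : ∀ x, χ 0 x = x)
    {R : ℝ} {p q : ℝ × E} (hq : |q.1| ≤ R) :
    dist (flowMap χ p) (flowMap χ q) ≤ (1 + M) * exp (L * R) * dist p q := by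
  have hM0 : 0 ≤ M := (norm_nonneg _).trans (hM 0 0)
  have hexp : exp (L * |q.1|) ≤ exp (L * R) := by gcongr
  have hexp1 : 1 ≤ exp (L * R) := one_le_exp (mul_nonneg L.2 ((abs_nonneg _).trans hq))
  have hs : dist p.1 q.1 ≤ dist p q := le_max_left _ _
  have hx : dist p.2 q.2 ≤ dist p q := le_max_right _ _
  have hd : 0 ≤ dist p q := dist_nonneg
  rw [Prod.dist_eq]
  refine max_le (hs.trans (le_mul_of_one_le_left hd (by nlinarith))) ?_
  calc dist (χ p.1 p.2) (χ q.1 q.2)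
      ≤ dist (χ p.1 p.2) (χ q.1 p.2) + dist (χ q.1 p.2) (χ q.1 q.2) := dist_triangle _ _ _
    _ ≤ M * dist p q + dist p q * exp (L * R) := by
      gcongr
      · exact (dist_flow_time_le hM hχ _ _ _).trans (by gcongr)
      · exact (dist_flow_le_mul_exp hv hχ hχ0 _ _ _).trans (by gcongr)
    _ ≤ (1 + M) * exp (L * R) * dist p q := by nlinarith [mul_nonneg hM0 hd]

theorem dist_le_dist_flowMap (hv : ∀ t, LipschitzWith L (v t)) (hM : ∀ t x, ‖v t x‖ ≤ M)
    (hχ : ∀ x s, HasDerivAt (fun s => χ s x) (v s (χ s x)) s) (hχ0 : ∀ x, χ 0 x = x)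
    {R : ℝ} {p q : ℝ × E} (hp : |p.1| ≤ R) :
    dist p q ≤ (1 + M) * exp (L * R) * dist (flowMap χ p) (flowMap χ q) := by
  have hM0 : 0 ≤ M := (norm_nonneg _).trans (hM 0 0)
  have hexp1 : 1 ≤ exp (L * R) := one_le_exp (mul_nonneg L.2 ((abs_nonneg _).trans hp))
  set d := dist (flowMap χ p) (flowMap χ q)
  have hs : dist p.1 q.1 ≤ d := le_max_left _ _
  have hx : dist (χ p.1 p.2) (χ q.1 q.2) ≤ d := le_max_right _ _
  have hd : 0 ≤ d := dist_nonneg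
  rw [Prod.dist_eq]
  refine max_le (hs.trans (le_mul_of_one_le_left hd (by nlinarith))) ?_
  calc dist p.2 q.2 ≤ dist (χ p.1 p.2) (χ p.1 q.2) * exp (L * |p.1|) :=
        dist_le_dist_flow_mul_exp hv hχ hχ0 _ _ _
    _ ≤ (dist (χ p.1 p.2) (χ q.1 q.2) + dist (χ q.1 q.2) (χ p.1 q.2)) * exp (L * R) := by
        gcongr
        exact dist_triangle _ _ _
    _ ≤ (d + M * d) * exp (L * R) := by
        gcongr
        exact (dist_flow_time_le hM hχ _ _ _).trans (by rw [dist_comm]; gcongr)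
    _ = (1 + M) * exp (L * R) * d := by ring

theorem lipschitzOnWith_flowMap_strip (hv : ∀ t, LipschitzWith L (v t))
    (hM : ∀ t x, ‖v t x‖ ≤ M) (hχ : ∀ x s, HasDerivAt (fun s => χ s x) (v s (χ s x)) s)
    (hχ0 : ∀ x, χ 0 x = x) (R : ℝ) :
    LipschitzOnWith ((1 + M) * exp (L * R)).toNNReal (flowMap χ) (strip R) :=
  .of_dist_le' fun _ _ _ hq => dist_flowMap_le hv hM hχ hχ0 (le_of_lt hq)

theorem lipschitzOnWith_symm_strip (hv : ∀ t, LipschitzWith L (v t)) (hM : ∀ t x, ‖v t x‖ ≤ M)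
    (hχ : ∀ x s, HasDerivAt (fun s => χ s x) (v s (χ s x)) s) (hχ0 : ∀ x, χ 0 x = x)
    (e : ℝ × E ≃ ℝ × E) (he : ⇑e = flowMap χ) (R : ℝ) :
    LipschitzOnWith ((1 + M) * exp (L * R)).toNNReal e.symm (strip R) :=
  .of_dist_le' fun q hq q' _ => by
    have hfst : (e.symm q).1 = q.1 := by
      conv_rhs => rw [← e.apply_symm_apply q, he]
      rfl
    have hR : |(e.symm q).1| ≤ R := by rw [hfst]; exact le_of_lt hq
    simpa [← he] using dist_le_dist_flowMap hv hM hχ hχ0 (q := e.symm q') hR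

end FlowMap

theorem flowMap_surjective {v : ℝ → ℝ → ℝ} {L : ℝ≥0} {M : ℝ} {χ : ℝ → ℝ → ℝ}
    (hv : ∀ t, LipschitzWith L (v t)) (hM : ∀ t x, ‖v t x‖ ≤ M)
    (hχ : ∀ x s, HasDerivAt (fun s => χ s x) (v s (χ s x)) s) (hχ0 : ∀ x, χ 0 x = x) :
    Function.Surjective (flowMap χ) := by
  rintro ⟨s, y⟩
  have hnear : ∀ x, |χ s x - x| ≤ M * |s| := fun x => by
    simpa [hχ0, Real.dist_eq] using dist_flow_time_le hM hχ x s 0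
  have hlow : ∀ x, x + -(M * |s|) ≤ χ s x := fun x => by linarith [(abs_le.1 (hnear x)).1]
  have hup : ∀ x, χ s x ≤ x + M * |s| := fun x => by linarith [(abs_le.1 (hnear x)).2]
  obtain ⟨x, hx⟩ := (lipschitzWith_flow hv hχ hχ0 s).continuous.surjective
    (tendsto_atTop_mono hlow (tendsto_atTop_add_const_right _ _ tendsto_id))
    (tendsto_atBot_mono hup (tendsto_atBot_add_const_right _ _ tendsto_id)) y
  exact ⟨(s, x), by simp [flowMap, hx]⟩

/-- The flow map Ψ(s,τ) = (s, χ(s,τ)) of a bounded Lipschitz vector field is a bijective,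
locally biLipschitz homeomorphism of ℝ² onto ℝ². -/
theorem stmt_2 (f : ℝ × ℝ → ℝ) (L : NNReal) (hLip : LipschitzWith L f)
    (M : ℝ) (hBd : ∀ p, |f p| ≤ M)
    (χ : ℝ → ℝ → ℝ)
    (hinit : ∀ τ, χ 0 τ = τ)
    (hode : ∀ τ s, HasDerivAt (fun s => χ s τ) (f (s, χ s τ)) s) :
    Function.Bijective (fun p : ℝ × ℝ => (p.1, χ p.1 p.2)) ∧
    ∃ Φ : ℝ × ℝ ≃ₜ ℝ × ℝ, (∀ p : ℝ × ℝ, Φ p = (p.1, χ p.1 p.2)) ∧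
      ∀ p : ℝ × ℝ, ∃ (U : Set (ℝ × ℝ)) (K : NNReal), p ∈ U ∧ IsOpen U ∧
        LipschitzOnWith K (⇑Φ) U ∧ LipschitzOnWith K (⇑Φ.symm) (⇑Φ '' U) := by
  have hv : ∀ t, LipschitzWith L fun x => f (t, x) := fun t => by
    simpa [Function.comp_def] using hLip.comp (LipschitzWith.prodMk_left t)
  have hM : ∀ t x, ‖f (t, x)‖ ≤ M := fun t x => hBd (t, x)
  have hbij : Function.Bijective (flowMap χ) :=
    ⟨flowMap_injective hv hode hinit, flowMap_surjective hv hM hode hinit⟩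
  set e := Equiv.ofBijective _ hbij
  have hlip := lipschitzOnWith_flowMap_strip hv hM hode hinit
  have hlip_symm := lipschitzOnWith_symm_strip hv hM hode hinit e rfl
  let Φ : ℝ × ℝ ≃ₜ ℝ × ℝ :=
    ⟨e, (LocallyLipschitz.of_lipschitzOnWith_strip _ hlip).continuous,
      (LocallyLipschitz.of_lipschitzOnWith_strip _ hlip_symm).continuous⟩
  refine ⟨hbij, Φ, fun _ => rfl, fun p => ⟨strip (|p.1| + 1), _, mem_strip_abs_fst_add_one p,
    isOpen_strip _, hlip _, ?_⟩⟩
  rw [show ⇑Φ = flowMap χ from rfl, flowMap_image_strip hbij.2]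
  exact hlip_symm _
end

section
/- Let A, B ∈ ℝ with B² ≤ 2A, and set h(t) := A·t²/2 + B·t + 1. If for every compactly supported C¹ function φ : ℝ → ℝ one has ∫_ℝ φ'(t)² h(t) dt ≥ (2A − B²) ∫_ℝ φ(t)² / h(t) dt, then B² = 2A. -/
/-!
If `B² < 2A`, put `k = √(2A - B²)`. The substitution `u = (At + B)/k` turns `h` into
`k²/(2A) · (1 + u²)`, and the hypothesis into `4 ∫ ψ²/(1+u²) ≤ ∫ ψ'² (1+u²)` for every
test function `ψ`. The constant `4` is too large (under `u = tan θ` this becomes Poincaré's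
inequality on `(-π/2, π/2)`, whose sharp constant is `1`); the explicit violation used here
is `ψ(u) = ((4 - u²)⁺)²`, with `1/(1+u²) ≥ 1 - u²` to keep every integral polynomial.
-/

open MeasureTheory Set Filter Function Topology

theorem hasDerivAt_max_zero_sq (x : ℝ) :
    HasDerivAt (fun y : ℝ => max y 0 ^ 2) (2 * max x 0) x := by
  refine hasDerivAt_of_hasDerivAt_of_ne' (f := fun y : ℝ => max y 0 ^ 2)
    (g := fun y => 2 * max y 0) (x := 0) (fun y hy => ?_) (by fun_prop) (by fun_prop) x
  rcases hy.lt_or_gt with hy | hy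
  · have hzero : (fun z : ℝ => max z 0 ^ 2) =ᶠ[𝓝 y] fun _ => 0 :=
      (eventually_lt_nhds hy).mono fun z hz => by simp [max_eq_right hz.le]
    simpa [max_eq_right hy.le] using (hasDerivAt_const y (0 : ℝ)).congr_of_eventuallyEq hzero
  · have hsq : (fun z : ℝ => max z 0 ^ 2) =ᶠ[𝓝 y] fun z => z ^ 2 :=
      (eventually_gt_nhds hy).mono fun z hz => by simp [max_eq_left hz.le]
    simpa [max_eq_left hy.le] using (hasDerivAt_pow 2 y).congr_of_eventuallyEq hsq

theorem integral_eq_intervalIntegral_of_eqOn {f g : ℝ → ℝ} {a b : ℝ} (hab : a ≤ b)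
    (hf : support f ⊆ Ioc a b) (hfg : EqOn f g (Icc a b)) :
    ∫ x, f x = ∫ x in a..b, g x :=
  (intervalIntegral.integral_eq_integral_of_support_subset hf).symm.trans
    (intervalIntegral.integral_congr (by rwa [uIcc_of_le hab]))

theorem integral_comp_mul_add_const (F : ℝ → ℝ) (c s : ℝ) :
    ∫ t, F (c * (t + s)) = |c⁻¹| * ∫ u, F u :=
  (integral_add_right_eq_self (fun t => F (c * t)) s).trans (Measure.integral_comp_mul_left F c)

theorem deriv_comp_mul_add_const (ψ : ℝ → ℝ) (c s t : ℝ) :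
    deriv (fun t => ψ (c * (t + s))) t = c * deriv ψ (c * (t + s)) :=
  (deriv_comp_add_const (fun x => ψ (c * x)) s t).trans (deriv_comp_mul_left c ψ (t + s))

noncomputable def bump (u : ℝ) : ℝ := max (4 - u ^ 2) 0 ^ 2

theorem max_four_sub_sq_eq_zero {u : ℝ} (hu : u ∉ Ioo (-2) 2) : max (4 - u ^ 2) 0 = 0 := by
  rw [mem_Ioo, not_and_or, not_lt, not_lt] at hu
  exact max_eq_right (by rcases hu with hu | hu <;> nlinarith)

theorem max_four_sub_sq_eqOn :
    EqOn (fun u : ℝ => max (4 - u ^ 2) 0) (fun u => 4 - u ^ 2) (Icc (-2) 2) :=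
  fun u hu => max_eq_left (by nlinarith [hu.1, hu.2])

theorem hasDerivAt_bump (u : ℝ) : HasDerivAt bump (-4 * u * max (4 - u ^ 2) 0) u := by
  have hinner : HasDerivAt (fun u : ℝ => 4 - u ^ 2) (-(2 * u)) u := by
    simpa using (hasDerivAt_pow 2 u).const_sub 4
  exact ((hasDerivAt_max_zero_sq _).comp u hinner).congr_deriv (by ring)

theorem deriv_bump : deriv bump = fun u => -4 * u * max (4 - u ^ 2) 0 :=
  funext fun u => (hasDerivAt_bump u).deriv

theorem contDiff_bump : ContDiff ℝ 1 bump :=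
  contDiff_one_iff_deriv.2 ⟨fun u => (hasDerivAt_bump u).differentiableAt, by
    rw [deriv_bump]; fun_prop⟩

theorem hasCompactSupport_bump : HasCompactSupport bump :=
  HasCompactSupport.intro isCompact_Icc (K := Icc (-2) 2) fun u hu => by
    simp [bump, max_four_sub_sq_eq_zero fun h => hu (Ioo_subset_Icc_self h)]

theorem integral_deriv_bump_sq_mul :
    ∫ u, deriv bump u ^ 2 * (1 + u ^ 2) = 32768 / 45 := by
  rw [integral_eq_intervalIntegral_of_eqOn (a := -2) (b := 2)
    (g := fun u => 256 * u ^ 2 + 128 * u ^ 4 - 112 * u ^ 6 + 16 * u ^ 8) (by norm_num)]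
  · simp (disch := exact Continuous.intervalIntegrable (by fun_prop) _ _) only
      [intervalIntegral.integral_add, intervalIntegral.integral_sub,
        intervalIntegral.integral_const_mul, integral_pow]
    norm_num
  · intro u hu
    by_contra h
    exact hu (by simp [deriv_bump, max_four_sub_sq_eq_zero (fun h' => h (Ioo_subset_Ioc_self h'))])
  · intro u hu
    simp only [deriv_bump, max_four_sub_sq_eqOn hu]
    ring

theorem integral_bump_sq_mul_one_sub_sq :
    ∫ u, bump u ^ 2 * (1 - u ^ 2) = 917504 / 3465 := by
  rw [integral_eq_intervalIntegral_of_eqOn (a := -2) (b := 2)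
    (g := fun u => 256 - 512 * u ^ 2 + 352 * u ^ 4 - 112 * u ^ 6 + 17 * u ^ 8 - u ^ 10)
    (by norm_num)]
  · simp (disch := exact Continuous.intervalIntegrable (by fun_prop) _ _) only
      [intervalIntegral.integral_add, intervalIntegral.integral_sub,
        intervalIntegral.integral_const_mul, integral_pow, intervalIntegral.integral_const]
    norm_num
  · intro u hu
    by_contra h
    exact hu (by simp [bump, max_four_sub_sq_eq_zero (fun h' => h (Ioo_subset_Ioc_self h'))])
  · intro u hu
    simp only [bump, max_four_sub_sq_eqOn hu]
    ring

theorem integrable_bump_sq_mul {g : ℝ → ℝ} (hg : Continuous g) :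
    Integrable fun u => bump u ^ 2 * g u :=
  ((contDiff_bump.continuous.pow 2).mul hg).integrable_of_hasCompactSupport
    (hasCompactSupport_bump.mono fun u hu h0 => hu (by simp [h0]))

theorem integral_deriv_bump_sq_mul_lt :
    ∫ u, deriv bump u ^ 2 * (1 + u ^ 2) < 4 * ∫ u, bump u ^ 2 / (1 + u ^ 2) := by
  have hlower : ∫ u, bump u ^ 2 * (1 - u ^ 2) ≤ ∫ u, bump u ^ 2 / (1 + u ^ 2) := by
    refine integral_mono (integrable_bump_sq_mul (by fun_prop)) ?_ fun u => ?_
    · simpa only [div_eq_mul_inv] using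
        integrable_bump_sq_mul (g := fun u => (1 + u ^ 2)⁻¹)
          (by fun_prop (disch := intro; positivity))
    · rw [le_div_iff₀ (by positivity)]
      nlinarith [mul_nonneg (sq_nonneg (bump u)) (pow_nonneg (sq_nonneg u) 2)]
  rw [integral_deriv_bump_sq_mul]
  rw [integral_bump_sq_mul_one_sub_sq] at hlower
  linarith

section Rescaling

variable {A B k : ℝ}

theorem quadratic_eq_mul_one_add_sq (hA : A ≠ 0) (hk : k ≠ 0) (hk2 : k ^ 2 = 2 * A - B ^ 2)
    (t : ℝ) : A * t ^ 2 / 2 + B * t + 1 = k ^ 2 / (2 * A) * (1 + (A / k * (t + B / A)) ^ 2) := by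
  field_simp
  rw [hk2]
  ring

theorem integral_deriv_sq_mul_quadratic (hA : 0 < A) (hk : 0 < k)
    (hk2 : k ^ 2 = 2 * A - B ^ 2) (ψ : ℝ → ℝ) :
    ∫ t, deriv (fun t => ψ (A / k * (t + B / A))) t ^ 2 * (A * t ^ 2 / 2 + B * t + 1)
      = k / 2 * ∫ u, deriv ψ u ^ 2 * (1 + u ^ 2) := by
  have hsub := integral_comp_mul_add_const (fun u => deriv ψ u ^ 2 * (1 + u ^ 2)) (A / k) (B / A)
  rw [inv_div, abs_of_pos (div_pos hk hA)] at hsub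
  calc _ = ∫ t, A / 2 *
          (deriv ψ (A / k * (t + B / A)) ^ 2 * (1 + (A / k * (t + B / A)) ^ 2)) := by
        congr 1 with t
        rw [deriv_comp_mul_add_const, quadratic_eq_mul_one_add_sq hA.ne' hk.ne' hk2]
        field_simp
    _ = k / 2 * ∫ u, deriv ψ u ^ 2 * (1 + u ^ 2) := by
        rw [integral_const_mul, hsub]
        field_simp

theorem integral_sq_div_quadratic (hA : 0 < A) (hk : 0 < k) (hk2 : k ^ 2 = 2 * A - B ^ 2)
    (ψ : ℝ → ℝ) :
    ∫ t, ψ (A / k * (t + B / A)) ^ 2 / (A * t ^ 2 / 2 + B * t + 1)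
      = 2 / k * ∫ u, ψ u ^ 2 / (1 + u ^ 2) := by
  have hsub := integral_comp_mul_add_const (fun u => ψ u ^ 2 / (1 + u ^ 2)) (A / k) (B / A)
  rw [inv_div, abs_of_pos (div_pos hk hA)] at hsub
  calc _ = ∫ t, 2 * A / k ^ 2 *
          (ψ (A / k * (t + B / A)) ^ 2 / (1 + (A / k * (t + B / A)) ^ 2)) := by
        congr 1 with t
        rw [quadratic_eq_mul_one_add_sq hA.ne' hk.ne' hk2]
        field_simp
    _ = 2 / k * ∫ u, ψ u ^ 2 / (1 + u ^ 2) := by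
        rw [integral_const_mul, hsub]
        field_simp

end Rescaling

/-- Rigidity for the Hardy-type inequality: if ∫ φ'² h ≥ (2A − B²) ∫ φ²/h for all
compactly supported C¹ functions φ, with h(t)=At²/2+Bt+1 and B² ≤ 2A, then B² = 2A. -/
theorem stmt_4 (A B : ℝ) (hAB : B ^ 2 ≤ 2 * A)
    (h : ℝ → ℝ) (hdef : ∀ t, h t = A * t ^ 2 / 2 + B * t + 1)
    (hineq : ∀ φ : ℝ → ℝ, ContDiff ℝ 1 φ → HasCompactSupport φ →
      (2 * A - B ^ 2) * ∫ t, φ t ^ 2 / h t ≤ ∫ t, (deriv φ t) ^ 2 * h t) :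
    B ^ 2 = 2 * A := by
  by_contra hne
  have hlt : B ^ 2 < 2 * A := hAB.lt_of_ne hne
  have hA : 0 < A := by nlinarith [sq_nonneg B]
  obtain ⟨k, hk, hk2⟩ : ∃ k : ℝ, 0 < k ∧ k ^ 2 = 2 * A - B ^ 2 :=
    ⟨√(2 * A - B ^ 2), Real.sqrt_pos.2 (by linarith), Real.sq_sqrt (by linarith)⟩
  have hsupp : HasCompactSupport fun t => bump (A / k * (t + B / A)) :=
    (hasCompactSupport_bump.comp_smul (div_pos hA hk).ne').comp_homeomorph (Homeomorph.addRight _)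
  have key :=
    hineq (fun t => bump (A / k * (t + B / A))) (contDiff_bump.comp (by fun_prop)) hsupp
  simp only [hdef] at key
  rw [integral_sq_div_quadratic hA hk hk2, integral_deriv_sq_mul_quadratic hA hk hk2,
    ← hk2] at key
  have hscale : k ^ 2 * (2 / k * ∫ u, bump u ^ 2 / (1 + u ^ 2))
      = k / 2 * (4 * ∫ u, bump u ^ 2 / (1 + u ^ 2)) := by
    field_simp
    ring
  rw [hscale] at key
  exact (mul_lt_mul_of_pos_left integral_deriv_bump_sq_mul_lt (half_pos hk)).not_ge key
end

section
/- Let a, b : ℝ → ℝ and suppose that for every τ₁, τ₂ ∈ ℝ the inequality 2(a(τ₁) − a(τ₂))(τ₁ − τ₂) ≥ (b(τ₁) − b(τ₂))² holds. Then at every point τ where both a and b are differentiable, one has b'(τ)² ≤ 2a'(τ). -/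
/-- If 2(a(τ₁)−a(τ₂))(τ₁−τ₂) ≥ (b(τ₁)−b(τ₂))² for all τ₁, τ₂, then b'² ≤ 2a' at every
common differentiability point. -/
theorem stmt_5 (a b : ℝ → ℝ)
    (h : ∀ τ₁ τ₂, (b τ₁ - b τ₂) ^ 2 ≤ 2 * (a τ₁ - a τ₂) * (τ₁ - τ₂))
    (τ a' b' : ℝ) (ha : HasDerivAt a a' τ) (hb : HasDerivAt b b' τ) :
    b' ^ 2 ≤ 2 * a' := by
  have hsa := hasDerivAt_iff_tendsto_slope.mp ha
  have hsb := hasDerivAt_iff_tendsto_slope.mp hb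
  have hle : nhdsWithin τ (Set.Ioi τ) ≤ nhdsWithin τ {τ}ᶜ :=
    nhdsWithin_mono τ (fun x hx => ne_of_gt hx)
  have hF : Filter.Tendsto (fun x => (slope b τ x) ^ 2) (nhdsWithin τ (Set.Ioi τ))
      (nhds (b' ^ 2)) := ((hsb.mono_left hle).pow 2)
  have hG : Filter.Tendsto (fun x => 2 * slope a τ x) (nhdsWithin τ (Set.Ioi τ))
      (nhds (2 * a')) := (hsa.mono_left hle).const_mul 2
  refine le_of_tendsto_of_tendsto hF hG ?_
  filter_upwards [self_mem_nhdsWithin] with x hx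
  have hxτ : (0:ℝ) < x - τ := sub_pos.mpr hx
  have key := h x τ
  have : (b x - b τ) ^ 2 / (x - τ) ^ 2 ≤ 2 * (a x - a τ) * (x - τ) / (x - τ) ^ 2 :=
    div_le_div_of_nonneg_right key (by positivity) |>.trans_eq rfl
  simp only [slope_def_field, div_pow] at *
  calc (b x - b τ) ^ 2 / (x - τ) ^ 2
      ≤ 2 * (a x - a τ) * (x - τ) / (x - τ) ^ 2 := this
    _ = 2 * ((a x - a τ) / (x - τ)) := by field_simp
end

section
/- Let a : ℝ → ℝ be continuous and nondecreasing, and let f : ℝ² → ℝ be the unique continuous function satisfying f(s, a(τ)·s²/2 + τ) = a(τ)·s for all (s, τ) ∈ ℝ². Then f is locally Lipschitz on ℝ² \ {(y,t) : y = 0}. Moreover, if a is locally Lipschitz, then f is locally Lipschitz on all of ℝ². -/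
/-!
Write `τ(y, t)` for the parameter of the parabola `t = a(τ) y² / 2 + τ` through `(y, t)`, so that
`f(y, t) = a(τ(y, t)) y`. Monotonicity of `a` gives
`|τ - τ'| ≤ |t - t'| + M |y² - y'²| / 2` whenever `|a τ|, |a τ'| ≤ M`, and `a ∘ τ` is locally
bounded, so `τ` is locally Lipschitz on all of `ℝ²`. Off the axis `f(y, t) = 2 (t - τ(y, t)) / y`
is then locally Lipschitz, and if `a` is locally Lipschitz so is `f = (a ∘ τ) · y`.
-/

open Set Metric Filter Topology

theorem Monotone.surjective_add_id {g : ℝ → ℝ} (hm : Monotone g) (hc : Continuous g) :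
    Function.Surjective fun x => g x + x :=
  (hc.add continuous_id).surjective
    (tendsto_atTop_add_left_of_le' atTop (g 0)
      (eventually_ge_atTop 0 |>.mono fun _ hx => hm hx) tendsto_id)
    (tendsto_atBot_add_left_of_ge' atBot (g 0)
      (eventually_le_atBot 0 |>.mono fun _ hx => hm hx) tendsto_id)

theorem ContDiffAt.exists_lipschitzOnWith_comp {α E F : Type*} [PseudoEMetricSpace α]
    [NormedAddCommGroup E] [NormedSpace ℝ E] [NormedAddCommGroup F] [NormedSpace ℝ F]
    {φ : E → F} {g : α → E} {x : α} (hφ : ContDiffAt ℝ 1 φ (g x)) (hg : LocallyLipschitz g) :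
    ∃ K, ∃ t ∈ 𝓝 x, LipschitzOnWith K (φ ∘ g) t := by
  obtain ⟨Kφ, u, hu, hφu⟩ := hφ.exists_lipschitzOnWith
  obtain ⟨Kg, t, ht, hgt⟩ := hg x
  exact ⟨Kφ * Kg, t ∩ g ⁻¹' u, inter_mem ht (hg.continuous.continuousAt hu),
    hφu.comp (hgt.mono inter_subset_left) fun _ hy => hy.2⟩

section ParabolaParameter

variable {a : ℝ → ℝ} (hm : Monotone a)
include hm

theorem exists_mul_sq_div_two_add_eq (hc : Continuous a) (y t : ℝ) :
    ∃ τ, a τ * y ^ 2 / 2 + τ = t :=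
  (hm.mul_const (sq_nonneg y)).div_const zero_le_two |>.surjective_add_id
    ((hc.mul continuous_const).div_const 2) t

theorem abs_sub_le_of_mul_sq_div_two_add_eq {y y' t t' τ τ' M : ℝ}
    (h : a τ * y ^ 2 / 2 + τ = t) (h' : a τ' * y' ^ 2 / 2 + τ' = t')
    (hM : |a τ| ≤ M) (hM' : |a τ'| ≤ M) :
    |τ - τ'| ≤ |t - t'| + M * |y ^ 2 - y' ^ 2| / 2 := by
  wlog hle : τ ≤ τ' generalizing y y' t t' τ τ'
  · rw [abs_sub_comm τ, abs_sub_comm t, abs_sub_comm (y ^ 2)]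
    exact this h' h hM' hM (le_of_not_ge hle)
  have hgap : τ' - τ ≤ (t' - t) + a τ * (y ^ 2 - y' ^ 2) / 2 := by
    nlinarith [mul_nonneg (sub_nonneg.2 (hm hle)) (sq_nonneg y')]
  have hslope : a τ * (y ^ 2 - y' ^ 2) ≤ M * |y ^ 2 - y' ^ 2| :=
    (le_abs_self _).trans (abs_mul (a τ) _ ▸ mul_le_mul_of_nonneg_right hM (abs_nonneg _))
  rw [abs_sub_comm, abs_of_nonneg (sub_nonneg.2 hle)]
  linarith [abs_sub_comm t t', le_abs_self (t' - t)]

variable {τ : ℝ × ℝ → ℝ} (hτ : ∀ q : ℝ × ℝ, a (τ q) * q.1 ^ 2 / 2 + τ q = q.2)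
include hτ

theorem abs_le_of_mul_sq_div_two_add_eq (q : ℝ × ℝ) : |τ q| ≤ |q.2 - a 0 * q.1 ^ 2 / 2| := by
  simpa using abs_sub_le_of_mul_sq_div_two_add_eq hm (hτ q) (y' := q.1) (τ' := 0) rfl
    (le_max_left |a (τ q)| |a 0|) (le_max_right _ _)

theorem exists_abs_comp_le_on_closedBall (p : ℝ × ℝ) :
    ∃ M, ∀ q ∈ closedBall p 1, |a (τ q)| ≤ M := by
  obtain ⟨C, hC⟩ := (isCompact_closedBall p 1).exists_bound_of_continuousOn
    (f := fun q : ℝ × ℝ => q.2 - a 0 * q.1 ^ 2 / 2) (by fun_prop)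
  refine ⟨max |a (-C)| |a C|, fun q hq => ?_⟩
  have hτC := abs_le.1 ((abs_le_of_mul_sq_div_two_add_eq hm hτ q).trans (hC q hq))
  exact abs_le_max_abs_abs (hm hτC.1) (hm hτC.2)

theorem locallyLipschitz_of_mul_sq_div_two_add_eq : LocallyLipschitz τ := by
  intro p
  obtain ⟨M, hM⟩ := exists_abs_comp_le_on_closedBall hm hτ p
  lift M to NNReal using (abs_nonneg _).trans (hM p (mem_closedBall_self zero_le_one))
  obtain ⟨K, t, ht, hK⟩ :=
    (contDiff_fst.pow 2 : ContDiff ℝ 1 fun q : ℝ × ℝ => q.1 ^ 2).locallyLipschitz p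
  refine ⟨1 + M * K / 2, closedBall p 1 ∩ t, inter_mem (closedBall_mem_nhds p one_pos) ht,
    LipschitzOnWith.of_dist_le_mul fun q hq q' hq' => ?_⟩
  have hsq := hK.dist_le_mul q hq.2 q' hq'.2
  have hsnd : dist q.2 q'.2 ≤ dist q q' := by rw [Prod.dist_eq]; exact le_max_right _ _
  simp only [Real.dist_eq] at hsq hsnd ⊢
  calc |τ q - τ q'| ≤ |q.2 - q'.2| + M * |q.1 ^ 2 - q'.1 ^ 2| / 2 :=
        abs_sub_le_of_mul_sq_div_two_add_eq hm (hτ q) (hτ q') (hM q hq.1) (hM q' hq'.1)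
    _ ≤ dist q q' + M * (K * dist q q') / 2 := by gcongr
    _ = ↑(1 + M * K / 2) * dist q q' := by push_cast; ring

end ParabolaParameter

theorem stmt_7_general (a : ℝ → ℝ) (hc : Continuous a) (hm : Monotone a)
    (f : ℝ × ℝ → ℝ)
    (heq : ∀ s τ, f (s, a τ * s ^ 2 / 2 + τ) = a τ * s) :
    (∀ p : ℝ × ℝ, p.1 ≠ 0 → ∃ (K : NNReal) (U : Set (ℝ × ℝ)), IsOpen U ∧ p ∈ U ∧
      U ⊆ {q : ℝ × ℝ | q.1 ≠ 0} ∧ LipschitzOnWith K f U) ∧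
    (LocallyLipschitz a → LocallyLipschitz f) := by
  choose τ hτ using fun q : ℝ × ℝ => exists_mul_sq_div_two_add_eq hm hc q.1 q.2
  have hτLip := locallyLipschitz_of_mul_sq_div_two_add_eq hm hτ
  have hf : ∀ q, f q = a (τ q) * q.1 := fun q => by simpa [hτ q] using heq q.1 (τ q)
  -- on the axis both sides vanish, since division by zero is zero
  have hf' : ∀ q, f q = 2 * (q.2 - τ q) / q.1 := fun q => by
    rcases eq_or_ne q.1 0 with h0 | h0
    · simp [hf, h0]
    · rw [hf, eq_div_iff h0, ← hτ q]; ring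
  refine ⟨fun p hp => ?_, fun ha p => ?_⟩
  · have hG : LocallyLipschitz fun q : ℝ × ℝ => (q.2 - τ q, q.1) :=
      (LipschitzWith.prod_snd.locallyLipschitz.sub hτLip).prodMk
        LipschitzWith.prod_fst.locallyLipschitz
    obtain ⟨K, t, ht, hK⟩ := ContDiffAt.exists_lipschitzOnWith_comp
      (φ := fun v : ℝ × ℝ => 2 * v.1 / v.2) (by fun_prop (disch := exact hp)) hG
    refine ⟨K, interior t ∩ {q | q.1 ≠ 0}, isOpen_interior.inter
      (isOpen_ne_fun continuous_fst continuous_const), ⟨mem_interior_iff_mem_nhds.2 ht, hp⟩,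
      inter_subset_right, ?_⟩
    rw [funext hf']
    exact hK.mono (inter_subset_left.trans interior_subset)
  · have hG : LocallyLipschitz fun q : ℝ × ℝ => (a (τ q), q.1) :=
      (ha.comp hτLip).prodMk LipschitzWith.prod_fst.locallyLipschitz
    rw [funext hf]
    exact ContDiffAt.exists_lipschitzOnWith_comp (φ := fun v : ℝ × ℝ => v.1 * v.2)
      contDiff_mul.contDiffAt hG

/-- The graphical-strip function f with f(s, a(τ)s²/2+τ) = a(τ)s is locally Lipschitz off
the axis {y = 0}; if a is locally Lipschitz it is locally Lipschitz on all of ℝ². -/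
theorem stmt_7 (a : ℝ → ℝ) (hc : Continuous a) (hm : Monotone a)
    (f : ℝ × ℝ → ℝ) (hf : Continuous f)
    (heq : ∀ s τ, f (s, a τ * s ^ 2 / 2 + τ) = a τ * s) :
    (∀ p : ℝ × ℝ, p.1 ≠ 0 → ∃ (K : NNReal) (U : Set (ℝ × ℝ)), IsOpen U ∧ p ∈ U ∧
      U ⊆ {q : ℝ × ℝ | q.1 ≠ 0} ∧ LipschitzOnWith K f U) ∧
    (LocallyLipschitz a → LocallyLipschitz f) :=
  stmt_7_general a hc hm f heq
end

section
/- Define f : ℝ² → ℝ by f(y,t) = 0 if t ≤ 0, f(y,t) = 2t/y if 0 < t ≤ y²/2, and f(y,t) = y if t > y²/2. Then the function ∇^f f := ∂_y f + f·∂_t f (computed pointwise where f is differentiable) equals 0 for t ≤ 0, equals 2t/y² for 0 < t ≤ y²/2, and equals 1 for t > y²/2; in particular ∇^f f is continuous on ℝ² \ {(0,0)} and bounded by 1. -/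
/-!
The intrinsic gradient `∇^f f = Df (1, f)` is the derivative of `f` along the characteristics,
the integral curves of `(1, f)`. These are explicit: the horizontal lines `t = const ≤ 0`, on which
`f = 0`; the parabolas `t = c y²` with `0 < c ≤ 1/2`, on which `f = 2 c y`; and the parabolas
`t = y² / 2 + k` with `k > 0`, on which `f = y`. Each curve `s ↦ (s, τ(s))` has velocity
`(1, f)`, so wherever `f` is differentiable the chain rule gives `∇^f f` as the slope of `f`
along it: `0`, `2c = 2t / y²` and `1` respectively.
-/

/-- The function of the first example. -/
noncomputable def F9 (p : ℝ × ℝ) : ℝ :=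
  if p.2 ≤ 0 then 0 else if p.2 ≤ p.1 ^ 2 / 2 then 2 * p.2 / p.1 else p.1

/-- The claimed intrinsic gradient ∇^f f. -/
noncomputable def G9 (p : ℝ × ℝ) : ℝ :=
  if p.2 ≤ 0 then 0 else if p.2 ≤ p.1 ^ 2 / 2 then 2 * p.2 / p.1 ^ 2 else 1

section Calculus

variable {𝕜 E F : Type*} [NontriviallyNormedField 𝕜] [NormedAddCommGroup E] [NormedSpace 𝕜 E]
  [NormedAddCommGroup F] [NormedSpace 𝕜 F]

theorem DifferentiableAt.fderiv_apply_eq_of_hasDerivAt_comp {f : E → F} {x : E} {γ : 𝕜 → E}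
    {s : 𝕜} {v : E} {a : F} (hf : DifferentiableAt 𝕜 f x) (hγs : γ s = x)
    (hγ : HasDerivAt γ v s) (hfγ : HasDerivAt (f ∘ γ) a s) : fderiv 𝕜 f x v = a := by
  subst hγs
  exact (hf.hasFDerivAt.comp_hasDerivAt s hγ).unique hfγ

theorem ContinuousLinearMap.apply_one_zero_add_smul_apply_zero_one (L : 𝕜 × 𝕜 →L[𝕜] F) (c : 𝕜) :
    L (1, 0) + c • L (0, 1) = L (1, c) := by
  rw [← map_smul, ← map_add, Prod.smul_mk, smul_zero, smul_eq_mul, mul_one, Prod.mk_add_mk,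
    add_zero, zero_add]

end Calculus

theorem F9_of_snd_nonpos {p : ℝ × ℝ} (hp : p.2 ≤ 0) : F9 p = 0 := if_pos hp

theorem F9_of_pos_of_le {p : ℝ × ℝ} (h0 : 0 < p.2) (hp : p.2 ≤ p.1 ^ 2 / 2) :
    F9 p = 2 * p.2 / p.1 := by
  rw [F9, if_neg h0.not_ge, if_pos hp]

theorem F9_of_lt {p : ℝ × ℝ} (hp : p.1 ^ 2 / 2 < p.2) : F9 p = p.1 := by
  have h0 : ¬ p.2 ≤ 0 := fun h => by nlinarith [sq_nonneg p.1]
  rw [F9, if_neg h0, if_neg hp.not_ge]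

theorem G9_of_snd_nonpos {p : ℝ × ℝ} (hp : p.2 ≤ 0) : G9 p = 0 := if_pos hp

theorem G9_of_pos_of_le {p : ℝ × ℝ} (h0 : 0 < p.2) (hp : p.2 ≤ p.1 ^ 2 / 2) :
    G9 p = 2 * p.2 / p.1 ^ 2 := by
  rw [G9, if_neg h0.not_ge, if_pos hp]

theorem G9_of_lt {p : ℝ × ℝ} (hp : p.1 ^ 2 / 2 < p.2) : G9 p = 1 := by
  have h0 : ¬ p.2 ≤ 0 := fun h => by nlinarith [sq_nonneg p.1]
  rw [G9, if_neg h0, if_neg hp.not_ge]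

theorem F9_mul_sq {c : ℝ} (hc0 : 0 < c) (hc : c ≤ 1 / 2) (s : ℝ) :
    F9 (s, c * s ^ 2) = 2 * c * s := by
  rcases eq_or_ne s 0 with rfl | hs
  · simp [F9]
  · have hs2 : 0 < s ^ 2 := by positivity
    rw [F9_of_pos_of_le (by positivity) (by dsimp only; nlinarith)]
    field_simp

theorem F9_sq_div_two_add {k : ℝ} (hk : 0 < k) (s : ℝ) : F9 (s, s ^ 2 / 2 + k) = s :=
  F9_of_lt (by dsimp only; linarith)

theorem fderiv_F9_apply_one_F9_of_nonpos {y t : ℝ} (hq : DifferentiableAt ℝ F9 (y, t))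
    (ht : t ≤ 0) :
    fderiv ℝ F9 (y, t) (1, F9 (y, t)) = G9 (y, t) := by
  have hγ : HasDerivAt (fun s : ℝ => (s, t)) ((1 : ℝ), F9 (y, t)) y := by
    rw [F9_of_snd_nonpos ht]
    exact (hasDerivAt_id y).prodMk (hasDerivAt_const y t)
  have hfγ : F9 ∘ (fun s : ℝ => (s, t)) = fun _ => 0 := funext fun _ => F9_of_snd_nonpos ht
  rw [hq.fderiv_apply_eq_of_hasDerivAt_comp (s := y) rfl hγ (hfγ ▸ hasDerivAt_const y 0),
    G9_of_snd_nonpos ht]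

theorem fderiv_F9_apply_one_F9_of_pos_of_le {y t : ℝ} (hq : DifferentiableAt ℝ F9 (y, t))
    (ht0 : 0 < t) (ht : t ≤ y ^ 2 / 2) :
    fderiv ℝ F9 (y, t) (1, F9 (y, t)) = G9 (y, t) := by
  have hy : y ≠ 0 := by rintro rfl; norm_num at ht; linarith
  set c := t / y ^ 2 with hc
  have hc0 : 0 < c := by positivity
  have hc1 : c ≤ 1 / 2 := by rw [hc, div_le_iff₀ (by positivity)]; linarith
  have hyt : c * y ^ 2 = t := by rw [hc]; field_simp
  have hγ : HasDerivAt (fun s : ℝ => (s, c * s ^ 2)) ((1 : ℝ), F9 (y, t)) y := by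
    refine (hasDerivAt_id y).prodMk (((hasDerivAt_pow 2 y).const_mul c).congr_deriv ?_)
    rw [F9_of_pos_of_le ht0 ht, hc]
    field_simp
    ring
  have hfγ : F9 ∘ (fun s : ℝ => (s, c * s ^ 2)) = fun s => 2 * c * s :=
    funext (F9_mul_sq hc0 hc1)
  have hslope : HasDerivAt (fun s : ℝ => 2 * c * s) (2 * c) y := by
    simpa using (hasDerivAt_id y).const_mul (2 * c)
  rw [hq.fderiv_apply_eq_of_hasDerivAt_comp (by rw [hyt]) hγ (hfγ ▸ hslope),
    G9_of_pos_of_le ht0 ht, hc]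
  ring

theorem fderiv_F9_apply_one_F9_of_lt {y t : ℝ} (hq : DifferentiableAt ℝ F9 (y, t))
    (ht : y ^ 2 / 2 < t) :
    fderiv ℝ F9 (y, t) (1, F9 (y, t)) = G9 (y, t) := by
  set k := t - y ^ 2 / 2
  have hγ : HasDerivAt (fun s : ℝ => (s, s ^ 2 / 2 + k)) ((1 : ℝ), F9 (y, t)) y := by
    refine (hasDerivAt_id y).prodMk
      ((((hasDerivAt_pow 2 y).div_const 2).add_const k).congr_deriv ?_)
    rw [F9_of_lt ht]
    ring
  have hfγ : F9 ∘ (fun s : ℝ => (s, s ^ 2 / 2 + k)) = id :=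
    funext (F9_sq_div_two_add (sub_pos.mpr ht))
  rw [hq.fderiv_apply_eq_of_hasDerivAt_comp (by simp [k]) hγ (hfγ ▸ hasDerivAt_id y),
    G9_of_lt ht]

theorem fderiv_F9_apply_one_F9 {y t : ℝ} (hq : DifferentiableAt ℝ F9 (y, t)) :
    fderiv ℝ F9 (y, t) (1, F9 (y, t)) = G9 (y, t) := by
  rcases le_or_gt t 0 with ht0 | ht0
  · exact fderiv_F9_apply_one_F9_of_nonpos hq ht0
  rcases le_or_gt t (y ^ 2 / 2) with ht | ht
  · exact fderiv_F9_apply_one_F9_of_pos_of_le hq ht0 ht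
  · exact fderiv_F9_apply_one_F9_of_lt hq ht

theorem G9_eq_max_min {p : ℝ × ℝ} (hp : p.1 ≠ 0) :
    G9 p = max 0 (min 1 (2 * p.2 / p.1 ^ 2)) := by
  have hp2 : 0 < p.1 ^ 2 := by positivity
  rcases le_or_gt p.2 0 with h0 | h0
  · rw [G9_of_snd_nonpos h0, eq_comm, max_eq_left]
    exact (min_le_right _ _).trans (div_nonpos_of_nonpos_of_nonneg (by linarith) hp2.le)
  rcases le_or_gt p.2 (p.1 ^ 2 / 2) with h1 | h1
  · have hle : 2 * p.2 / p.1 ^ 2 ≤ 1 := by rw [div_le_one hp2]; linarith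
    rw [G9_of_pos_of_le h0 h1, min_eq_right hle, max_eq_right (by positivity)]
  · have hge : 1 ≤ 2 * p.2 / p.1 ^ 2 := by rw [le_div_iff₀ hp2]; linarith
    rw [G9_of_lt h1, min_eq_left hge, max_eq_right zero_le_one]

theorem continuousOn_G9 : ContinuousOn G9 {q : ℝ × ℝ | q ≠ (0, 0)} := by
  have hfst : ContinuousOn G9 {p | p.1 ≠ 0} := by
    refine ContinuousOn.congr ?_ fun p hp => G9_eq_max_min hp
    exact fun p hp => by fun_prop (disch := exact pow_ne_zero 2 hp)
  have hneg : ContinuousOn G9 {p | p.2 < 0} :=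
    continuousOn_const.congr fun p hp => G9_of_snd_nonpos (le_of_lt hp)
  have hpos : ContinuousOn G9 {p | p.1 ^ 2 / 2 < p.2} :=
    continuousOn_const.congr fun p hp => G9_of_lt hp
  refine continuousOn_of_forall_continuousAt fun q hq => ?_
  rcases ne_or_eq q.1 0 with hy | hy
  · exact hfst.continuousAt ((isOpen_ne_fun continuous_fst continuous_const).mem_nhds hy)
  rcases lt_or_gt_of_ne (fun ht => hq (Prod.ext hy ht) : q.2 ≠ 0) with ht | ht
  · exact hneg.continuousAt ((isOpen_lt continuous_snd continuous_const).mem_nhds ht)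
  · exact hpos.continuousAt ((isOpen_lt (by fun_prop) continuous_snd).mem_nhds (by simpa [hy]))

theorem G9_mem_Icc (p : ℝ × ℝ) : G9 p ∈ Set.Icc 0 1 := by
  rcases le_or_gt p.2 0 with h0 | h0
  · simp [G9_of_snd_nonpos h0]
  rcases le_or_gt p.2 (p.1 ^ 2 / 2) with h1 | h1
  · have hp2 : 0 < p.1 ^ 2 := by linarith
    rw [G9_of_pos_of_le h0 h1]
    exact ⟨by positivity, by rw [div_le_one hp2]; linarith⟩
  · simp [G9_of_lt h1]

theorem stmt_9 :
    (∀ q : ℝ × ℝ, DifferentiableAt ℝ F9 q →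
      fderiv ℝ F9 q (1, 0) + F9 q * fderiv ℝ F9 q (0, 1) = G9 q) ∧
    ContinuousOn G9 {q : ℝ × ℝ | q ≠ (0, 0)} ∧
    (∀ q : ℝ × ℝ, |G9 q| ≤ 1) := by
  refine ⟨fun q hq => ?_, continuousOn_G9, fun q => ?_⟩
  · rw [← smul_eq_mul, ContinuousLinearMap.apply_one_zero_add_smul_apply_zero_one]
    exact fderiv_F9_apply_one_F9 hq
  · obtain ⟨h0, h1⟩ := G9_mem_Icc q
    exact abs_le.mpr ⟨by linarith, h1⟩
end

section
/- Let a, b : ℝ → ℝ be locally Lipschitz, and suppose that, for each τ, the curve s ↦ (s, a(τ)s²/2 + b(τ)s + τ) is an integral curve of the vector field ∂_y + f·∂_t for a fixed locally Lipschitz function f : ℝ² → ℝ (i.e. a(τ)s + b(τ) = f(s, a(τ)s²/2 + b(τ)s + τ) for all s, τ). Then for all τ₁, τ₂ ∈ ℝ, either (a(τ₁), b(τ₁)) = (a(τ₂), b(τ₂)), or 2·(a(τ₁) − a(τ₂))·(τ₁ − τ₂) > (b(τ₁) − b(τ₂))². -/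
set_option maxHeartbeats 1000000 in
/-- If the parabolas χ(s,τ) = a(τ)s²/2 + b(τ)s + τ are integral curves of a single locally
Lipschitz vector field ∂_y + f ∂_t, then two distinct parabolas never intersect: either
(a,b) agree at τ₁, τ₂ or 2(a(τ₁)−a(τ₂))(τ₁−τ₂) > (b(τ₁)−b(τ₂))². -/
theorem stmt_19 (a b : ℝ → ℝ) (ha : LocallyLipschitz a) (hb : LocallyLipschitz b)
    (f : ℝ × ℝ → ℝ) (hf : LocallyLipschitz f)
    (hcurve : ∀ s τ : ℝ, a τ * s + b τ = f (s, a τ * s ^ 2 / 2 + b τ * s + τ)) :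
    ∀ τ₁ τ₂ : ℝ, (a τ₁ = a τ₂ ∧ b τ₁ = b τ₂) ∨
      2 * (a τ₁ - a τ₂) * (τ₁ - τ₂) > (b τ₁ - b τ₂) ^ 2 := by
  intro τ₁ τ₂
  -- if the parabolas meet at s₀, their slopes agree there
  have slope : ∀ s₀ : ℝ, a τ₁ * s₀ ^ 2 / 2 + b τ₁ * s₀ + τ₁ =
      a τ₂ * s₀ ^ 2 / 2 + b τ₂ * s₀ + τ₂ →
      a τ₁ * s₀ + b τ₁ = a τ₂ * s₀ + b τ₂ := by
    intro s₀ h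
    rw [hcurve s₀ τ₁, hcurve s₀ τ₂, h]
  by_cases hA : a τ₁ = a τ₂
  · by_cases hB : b τ₁ = b τ₂
    · exact Or.inl ⟨hA, hB⟩
    · exfalso
      have hBne : b τ₁ - b τ₂ ≠ 0 := sub_ne_zero.mpr hB
      set s₀ : ℝ := (τ₂ - τ₁) / (b τ₁ - b τ₂) with hs₀
      have hmeet : a τ₁ * s₀ ^ 2 / 2 + b τ₁ * s₀ + τ₁ =
          a τ₂ * s₀ ^ 2 / 2 + b τ₂ * s₀ + τ₂ := by
        rw [hA, hs₀]; field_simp; ring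
      have := slope s₀ hmeet
      rw [hA] at this
      exact hB (by linarith)
  · right
    by_contra hlt
    push_neg at hlt
    have hAne : a τ₁ - a τ₂ ≠ 0 := sub_ne_zero.mpr hA
    set A := a τ₁ - a τ₂ with hAdef
    set B := b τ₁ - b τ₂ with hBdef
    set T := τ₁ - τ₂ with hTdef
    have hd : 0 ≤ B ^ 2 - 2 * A * T := by linarith
    set d := Real.sqrt (B ^ 2 - 2 * A * T) with hddef
    have hd2 : d ^ 2 = B ^ 2 - 2 * A * T := Real.sq_sqrt hd
    set s₀ : ℝ := (d - B) / A with hs₀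
    have hmeet : a τ₁ * s₀ ^ 2 / 2 + b τ₁ * s₀ + τ₁ =
        a τ₂ * s₀ ^ 2 / 2 + b τ₂ * s₀ + τ₂ := by
      have h1 : A * s₀ ^ 2 / 2 + B * s₀ + T = 0 := by
        rw [hs₀]; field_simp; nlinarith [hd2]
      nlinarith [h1]
    have hsl := slope s₀ hmeet
    have hdz : d = 0 := by
      have : A * s₀ + B = 0 := by linear_combination hsl
      rw [hs₀] at this
      field_simp at this
      linarith
    have hT : T = B ^ 2 / (2 * A) := by
      rw [hdz] at hd2
      field_simp
      nlinarith [hd2]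
    have hs₀' : s₀ = -B / A := by rw [hs₀, hdz]; ring
    -- difference of the parabolas is A/2 (s - s₀)²
    have hdiff : ∀ s : ℝ, (a τ₁ * s ^ 2 / 2 + b τ₁ * s + τ₁) -
        (a τ₂ * s ^ 2 / 2 + b τ₂ * s + τ₂) = A / 2 * (s - s₀) ^ 2 := by
      intro s
      have : A * s ^ 2 / 2 + B * s + T = A / 2 * (s - s₀) ^ 2 := by
        rw [hT, hs₀']; field_simp; ring
      nlinarith [this]
    clear_value d s₀
    -- local Lipschitz constant at the tangency point
    obtain ⟨K, U, hU, hK⟩ := hf (s₀, a τ₁ * s₀ ^ 2 / 2 + b τ₁ * s₀ + τ₁)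
    have hc1 : ContinuousAt (fun s : ℝ => ((s, a τ₁ * s ^ 2 / 2 + b τ₁ * s + τ₁) : ℝ × ℝ)) s₀ := by
      fun_prop
    have hc2 : ContinuousAt (fun s : ℝ => ((s, a τ₂ * s ^ 2 / 2 + b τ₂ * s + τ₂) : ℝ × ℝ)) s₀ := by
      fun_prop
    have hev1 : ∀ᶠ s in nhds s₀, ((s, a τ₁ * s ^ 2 / 2 + b τ₁ * s + τ₁) : ℝ × ℝ) ∈ U :=
      hc1.tendsto.eventually_mem hU
    have hev2 : ∀ᶠ s in nhds s₀, ((s, a τ₂ * s ^ 2 / 2 + b τ₂ * s + τ₂) : ℝ × ℝ) ∈ U := by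
      have : ((s₀, a τ₂ * s₀ ^ 2 / 2 + b τ₂ * s₀ + τ₂) : ℝ × ℝ)
          = (s₀, a τ₁ * s₀ ^ 2 / 2 + b τ₁ * s₀ + τ₁) := by rw [hmeet]
      exact hc2.tendsto.eventually_mem (this ▸ hU)
    obtain ⟨δ, hδ, hδmem⟩ := Metric.eventually_nhds_iff.mp (hev1.and hev2)
    set h : ℝ := min (δ / 2) (1 / (K + 1)) with hhdef
    have hKpos : (0:ℝ) < (K:ℝ) + 1 := by positivity
    have hhpos : 0 < h := lt_min (by positivity) (by positivity)
    set s : ℝ := s₀ + h with hsdef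
    have hdist : dist s s₀ < δ := by
      rw [Real.dist_eq, hsdef]
      have : h ≤ δ / 2 := min_le_left _ _
      rw [abs_of_pos (by linarith [hhpos] : (0:ℝ) < s₀ + h - s₀)]
      linarith
    obtain ⟨hm1, hm2⟩ := hδmem hdist
    have hlip := hK.dist_le_mul _ hm1 _ hm2
    rw [← hcurve s τ₁, ← hcurve s τ₂] at hlip
    have hdprod : dist ((s, a τ₁ * s ^ 2 / 2 + b τ₁ * s + τ₁) : ℝ × ℝ)
        ((s, a τ₂ * s ^ 2 / 2 + b τ₂ * s + τ₂) : ℝ × ℝ)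
        = |A| / 2 * (s - s₀) ^ 2 := by
      rw [Prod.dist_eq, dist_self, Real.dist_eq, hdiff s,
        max_eq_right (abs_nonneg _), abs_mul, abs_div, abs_two, abs_of_nonneg (sq_nonneg (s - s₀))]
    rw [hdprod, Real.dist_eq] at hlip
    have hslope : a τ₁ * s + b τ₁ - (a τ₂ * s + b τ₂) = A * (s - s₀) := by
      have h1 : A * s₀ + B = 0 := by linear_combination hsl
      linear_combination h1
    rw [hslope, abs_mul] at hlip
    have hss : s - s₀ = h := by rw [hsdef]; ring
    rw [hss] at hlip
    rw [abs_of_pos hhpos] at hlip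
    have hApos : 0 < |A| := abs_pos.mpr hAne
    -- |A| h ≤ K |A|/2 h² and h ≤ 1/(K+1) gives a contradiction
    have hh1 : h ≤ 1 / (K + 1) := min_le_right _ _
    have hKnn : (0:ℝ) ≤ (K:ℝ) := K.2
    have hKh1 : (K:ℝ) * h < 1 := by
      have h2 : (K:ℝ) * h ≤ (K:ℝ) * (1 / ((K:ℝ) + 1)) :=
        mul_le_mul_of_nonneg_left hh1 hKnn
      have h3 : (K:ℝ) * (1 / ((K:ℝ) + 1)) < 1 := by
        rw [mul_one_div, div_lt_one hKpos]; linarith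
      linarith
    have hprod : 0 < (1 - (K:ℝ) * h) * (|A| * h) :=
      mul_pos (by linarith) (mul_pos hApos hhpos)
    nlinarith [hlip, hprod, mul_nonneg (mul_nonneg hKnn (abs_nonneg A)) (sq_nonneg h)]
end
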